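/- Fix m ≥ 0 and reals α_S, α_B, α_L > 0, α_{B_m}, α_{L_m} ≥ 0, P₁,…,P₅ > 0 with P₁ + ⋯ + P₅ = 1, and strictly positive transition rates β_B, β_L, γ_B, γ_L > 0. Let G be the (2m+3)×(2m+3) real matrix with rows/columns indexed 0,…,2m+2 and nonzero entries: G[0,0] = α_S(P₁−P₂−P₃); G[0,i] = β_B for 1 ≤ i ≤ m+1 and G[0,i] = β_L for m+2 ≤ i ≤ 2m+2; G[1,0] = α_S(2P₂+P₄) and G[m+2,0] = α_S(2P₃+P₅); G[i,i] = −(α_B+β_B+γ_B) for 1 ≤ i ≤ m and G[m+1,m+1] = −(α_{B_m}+β_B+γ_B); G[i+1,i] = 2α_B for 1 ≤ i ≤ m; G[i, m+1+i] = γ_L for 1 ≤ i ≤ m+1; G[m+2+j,m+2+j] = −(α_L+β_L+γ_L) for 0 ≤ j ≤ m−1 and G[2m+2,2m+2] = −(α_{L_m}+β_L+γ_L); G[m+3+j,m+2+j] = 2α_L for 0 ≤ j ≤ m−1; G[m+1+i, i] = γ_B for 1 ≤ i ≤ m+1; all other entries zero. Then G is an irreducible ML-matrix: all its off-diagonal entries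 are nonnegative, and for τ > max_i |G_{ii}| and every pair of indices i, j there exists k ≥ 1 with ((G + τI)^k)_{ij} > 0. -/
import Mathlib

set_option maxHeartbeats 1000000

/-- The mean-dynamics matrix `G` of the full multi-phenotype branching model *with*
phenotypic plasticity (Eq. (7) of the paper).  Index `0` is the stem-like phenotype S,
indices `1,…,m+1` are basal cells `B₀,…,B_m`, indices `m+2,…,2m+2` are luminal cells
`L₀,…,L_m`; `βB, βL` are de-differentiation rates and `γB, γL` the B→L and L→B
conversion rates. -/
def Gfull (m : ℕ) (αS αB αL αBm αLm βB βL γB γL P1 P2 P3 P4 P5 : ℝ) :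
    Matrix (Fin (2 * m + 3)) (Fin (2 * m + 3)) ℝ :=
  Matrix.of fun i j =>
    if i.val = 0 ∧ j.val = 0 then αS * (P1 - P2 - P3)
    else if i.val = 0 ∧ 1 ≤ j.val ∧ j.val ≤ m + 1 then βB
    else if i.val = 0 ∧ m + 2 ≤ j.val then βL
    else if i.val = 1 ∧ j.val = 0 then αS * (2 * P2 + P4)
    else if i.val = m + 2 ∧ j.val = 0 then αS * (2 * P3 + P5)
    else if i.val = j.val ∧ 1 ≤ i.val ∧ i.val ≤ m then -(αB + βB + γB)
    else if i.val = m + 1 ∧ j.val = m + 1 then -(αBm + βB + γB)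
    else if i.val = j.val + 1 ∧ 1 ≤ j.val ∧ j.val ≤ m then 2 * αB
    else if j.val = m + 1 + i.val ∧ 1 ≤ i.val ∧ i.val ≤ m + 1 then γL
    else if i.val = j.val ∧ m + 2 ≤ i.val ∧ i.val ≤ 2 * m + 1 then -(αL + βL + γL)
    else if i.val = 2 * m + 2 ∧ j.val = 2 * m + 2 then -(αLm + βL + γL)
    else if i.val = j.val + 1 ∧ m + 2 ≤ j.val ∧ j.val ≤ 2 * m + 1 then 2 * αL
    else if i.val = m + 1 + j.val ∧ 1 ≤ j.val ∧ j.val ≤ m + 1 then γB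
    else 0

lemma ite_nonneg' {c : Prop} [Decidable c] {a b : ℝ} (h1 : c → 0 ≤ a) (h2 : 0 ≤ b) :
    0 ≤ ite c a b := by
  by_cases h : c
  · rw [if_pos h]; exact h1 h
  · rw [if_neg h]; exact h2

lemma ite_pos_of_pos {c : Prop} [Decidable c] {a b : ℝ} (h1 : c) (h2 : 0 < a) :
    0 < ite c a b := by
  rw [if_pos h1]; exact h2

lemma ite_pos_of_neg {c : Prop} [Decidable c] {a b : ℝ} (h1 : ¬c) (h2 : 0 < b) :
    0 < ite c a b := by
  rw [if_neg h1]; exact h2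

lemma pow_entry_nonneg {n : ℕ} {A : Matrix (Fin n) (Fin n) ℝ} (h : ∀ i j, 0 ≤ A i j) :
    ∀ k (i j : Fin n), 0 ≤ (A ^ k) i j := by
  intro k
  induction k with
  | zero =>
    intro i j
    rw [pow_zero]
    by_cases hij : i = j <;> simp [Matrix.one_apply, hij]
  | succ k ih =>
    intro i j
    rw [pow_succ, Matrix.mul_apply]
    exact Finset.sum_nonneg fun t _ => mul_nonneg (ih i t) (h t j)

lemma pow_entry_pos_left {n : ℕ} {A : Matrix (Fin n) (Fin n) ℝ} (h : ∀ i j, 0 ≤ A i j)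
    {k : ℕ} {i l j : Fin n} (h1 : 0 < A i l) (h2 : 0 < (A ^ k) l j) :
    0 < (A ^ (k + 1)) i j := by
  rw [pow_succ', Matrix.mul_apply]
  refine Finset.sum_pos' (fun t _ => mul_nonneg (h i t) (pow_entry_nonneg h k t j)) ?_
  exact ⟨l, Finset.mem_univ l, mul_pos h1 h2⟩

lemma pow_entry_pos_right {n : ℕ} {A : Matrix (Fin n) (Fin n) ℝ} (h : ∀ i j, 0 ≤ A i j)
    {k : ℕ} {i l j : Fin n} (h1 : 0 < (A ^ k) i l) (h2 : 0 < A l j) :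
    0 < (A ^ (k + 1)) i j := by
  rw [pow_succ, Matrix.mul_apply]
  refine Finset.sum_pos' (fun t _ => mul_nonneg (pow_entry_nonneg h k i t) (h t j)) ?_
  exact ⟨l, Finset.mem_univ l, mul_pos h1 h2⟩

/-- With positive division rates, positive division probabilities and
strictly positive transition rates `βB, βL, γB, γL`, the matrix `G` of the full model is
an irreducible ML-matrix: all off-diagonal entries are nonnegative, and for every
`τ > max_i |G i i|` and every pair of indices `i, j` there is `k ≥ 1` with
`((G + τ•I)^k) i j > 0`. -/
theorem stmt12 (m : ℕ) (αS αB αL αBm αLm βB βL γB γL P1 P2 P3 P4 P5 : ℝ)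
    (hαS : 0 < αS) (hαB : 0 < αB) (hαL : 0 < αL) (hαBm : 0 ≤ αBm) (hαLm : 0 ≤ αLm)
    (hP1 : 0 < P1) (hP2 : 0 < P2) (hP3 : 0 < P3) (hP4 : 0 < P4) (hP5 : 0 < P5)
    (hPsum : P1 + P2 + P3 + P4 + P5 = 1)
    (hβB : 0 < βB) (hβL : 0 < βL) (hγB : 0 < γB) (hγL : 0 < γL)
    (G : Matrix (Fin (2 * m + 3)) (Fin (2 * m + 3)) ℝ)
    (hG : G = Gfull m αS αB αL αBm αLm βB βL γB γL P1 P2 P3 P4 P5) :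
    (∀ i j : Fin (2 * m + 3), i ≠ j → 0 ≤ G i j) ∧
    (∀ τ : ℝ, (∀ i : Fin (2 * m + 3), |G i i| < τ) →
      ∀ i j : Fin (2 * m + 3), ∃ k : ℕ, 1 ≤ k ∧
        0 < ((G + τ • (1 : Matrix (Fin (2 * m + 3)) (Fin (2 * m + 3)) ℝ)) ^ k) i j) := by
  -- off-diagonal entries of G are nonnegative
  have hoff : ∀ i j : Fin (2 * m + 3), i ≠ j → 0 ≤ G i j := by
    intro i j hij
    have hv : (i : ℕ) ≠ (j : ℕ) := fun h => hij (Fin.ext h)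
    rw [hG]
    simp only [Gfull, Matrix.of_apply]
    refine ite_nonneg' (fun h => absurd (show (i:ℕ) = (j:ℕ) by omega) hv) ?_
    refine ite_nonneg' (fun _ => hβB.le) ?_
    refine ite_nonneg' (fun _ => hβL.le) ?_
    refine ite_nonneg' (fun _ => by positivity) ?_
    refine ite_nonneg' (fun _ => by positivity) ?_
    refine ite_nonneg' (fun h => absurd (show (i:ℕ) = (j:ℕ) by omega) hv) ?_
    refine ite_nonneg' (fun h => absurd (show (i:ℕ) = (j:ℕ) by omega) hv) ?_
    refine ite_nonneg' (fun _ => by positivity) ?_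
    refine ite_nonneg' (fun _ => hγL.le) ?_
    refine ite_nonneg' (fun h => absurd (show (i:ℕ) = (j:ℕ) by omega) hv) ?_
    refine ite_nonneg' (fun h => absurd (show (i:ℕ) = (j:ℕ) by omega) hv) ?_
    refine ite_nonneg' (fun _ => by positivity) ?_
    exact ite_nonneg' (fun _ => hγB.le) le_rfl
  -- opaque names for the distinguished indices 0, 1, m+2
  obtain ⟨z, hz⟩ : ∃ z : Fin (2 * m + 3), (z : ℕ) = 0 := ⟨⟨0, by omega⟩, rfl⟩
  obtain ⟨o1, ho1⟩ : ∃ o1 : Fin (2 * m + 3), (o1 : ℕ) = 1 := ⟨⟨1, by omega⟩, rfl⟩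
  obtain ⟨om2, hom2⟩ : ∃ w : Fin (2 * m + 3), (w : ℕ) = m + 2 := ⟨⟨m + 2, by omega⟩, rfl⟩
  -- key positive off-diagonal entries of G
  have h0j : ∀ j : Fin (2 * m + 3), 1 ≤ (j : ℕ) → 0 < G z j := by
    intro j hj
    have hjl := j.isLt
    rw [hG]
    simp only [Gfull, Matrix.of_apply]
    by_cases hcase : (j : ℕ) ≤ m + 1
    · exact ite_pos_of_neg (by omega) (ite_pos_of_pos ⟨hz, hj, hcase⟩ hβB)
    · exact ite_pos_of_neg (by omega) (ite_pos_of_neg (by omega)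
        (ite_pos_of_pos ⟨hz, by omega⟩ hβL))
  have h10 : 0 < G o1 z := by
    rw [hG]
    simp only [Gfull, Matrix.of_apply]
    refine ite_pos_of_neg (by omega) (ite_pos_of_neg (by omega) (ite_pos_of_neg (by omega)
      (ite_pos_of_pos ⟨ho1, hz⟩ (by positivity))))
  have hm20 : 0 < G om2 z := by
    rw [hG]
    simp only [Gfull, Matrix.of_apply]
    refine ite_pos_of_neg (by omega) (ite_pos_of_neg (by omega) (ite_pos_of_neg (by omega)
      (ite_pos_of_neg (by omega) (ite_pos_of_pos ⟨hom2, hz⟩ (by positivity)))))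
  have hstepB : ∀ i j : Fin (2 * m + 3), 2 ≤ (i : ℕ) → (i : ℕ) ≤ m + 1 →
      (j : ℕ) + 1 = (i : ℕ) → 0 < G i j := by
    intro i j h1 h2 h3
    rw [hG]
    simp only [Gfull, Matrix.of_apply]
    refine ite_pos_of_neg (by omega) (ite_pos_of_neg (by omega) (ite_pos_of_neg (by omega)
      (ite_pos_of_neg (by omega) (ite_pos_of_neg (by omega) (ite_pos_of_neg (by omega)
      (ite_pos_of_neg (by omega) (ite_pos_of_pos ⟨by omega, by omega, by omega⟩
        (by positivity))))))))
  have hstepL : ∀ i j : Fin (2 * m + 3), m + 3 ≤ (i : ℕ) → (i : ℕ) ≤ 2 * m + 2 →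
      (j : ℕ) + 1 = (i : ℕ) → 0 < G i j := by
    intro i j h1 h2 h3
    rw [hG]
    simp only [Gfull, Matrix.of_apply]
    refine ite_pos_of_neg (by omega) (ite_pos_of_neg (by omega) (ite_pos_of_neg (by omega)
      (ite_pos_of_neg (by omega) (ite_pos_of_neg (by omega) (ite_pos_of_neg (by omega)
      (ite_pos_of_neg (by omega) (ite_pos_of_neg (by omega) (ite_pos_of_neg (by omega)
      (ite_pos_of_neg (by omega) (ite_pos_of_neg (by omega)
      (ite_pos_of_pos ⟨by omega, by omega, by omega⟩ (by positivity))))))))))))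
  refine ⟨hoff, ?_⟩
  intro τ hτ
  set A := G + τ • (1 : Matrix (Fin (2 * m + 3)) (Fin (2 * m + 3)) ℝ) with hA
  have hAoff : ∀ i j : Fin (2 * m + 3), i ≠ j → A i j = G i j := by
    intro i j hij
    simp [hA, Matrix.add_apply, Matrix.smul_apply, Matrix.one_apply_ne hij]
  have hAdiag : ∀ i : Fin (2 * m + 3), 0 < A i i := by
    intro i
    have := (abs_lt.mp (hτ i)).1
    simp only [hA, Matrix.add_apply, Matrix.smul_apply, Matrix.one_apply_eq, smul_eq_mul,
      mul_one]
    linarith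
  have hAnn : ∀ i j : Fin (2 * m + 3), 0 ≤ A i j := by
    intro i j
    by_cases hij : i = j
    · subst hij; exact (hAdiag i).le
    · rw [hAoff i j hij]; exact hoff i j hij
  have hA0j : ∀ j : Fin (2 * m + 3), 0 < A z j := by
    intro j
    by_cases hj : j = z
    · subst hj; exact hAdiag _
    · have hj' : 1 ≤ (j : ℕ) := by
        rcases Nat.eq_zero_or_pos (j : ℕ) with h | h
        · exact absurd (Fin.ext (by omega)) hj
        · exact h
      rw [hAoff _ _ (fun h => hj h.symm)]
      exact h0j j hj'
  -- every index reaches z (index 0)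
  have reach : ∀ N : ℕ, ∀ i : Fin (2 * m + 3), (i : ℕ) ≤ N →
      ∃ k : ℕ, 1 ≤ k ∧ 0 < (A ^ k) i z := by
    intro N
    induction N with
    | zero =>
      intro i hi
      have hiz : i = z := Fin.ext (by omega)
      exact ⟨1, le_refl 1, by rw [pow_one, hiz]; exact hAdiag z⟩
    | succ N ih =>
      intro i hi
      by_cases hle : (i : ℕ) ≤ N
      · exact ih i hle
      · have hiv : (i : ℕ) = N + 1 := by omega
        have hlt := i.isLt
        by_cases h1 : (i : ℕ) = 1
        · have hio : i = o1 := Fin.ext (by omega)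
          refine ⟨1, le_refl 1, ?_⟩
          rw [pow_one, hio, hAoff o1 z (fun h => by
            have := congrArg Fin.val h; omega)]
          exact h10
        · by_cases h2 : (i : ℕ) = m + 2
          · have hio : i = om2 := Fin.ext (by omega)
            refine ⟨1, le_refl 1, ?_⟩
            rw [pow_one, hio, hAoff om2 z (fun h => by
              have := congrArg Fin.val h; omega)]
            exact hm20
          · -- here 2 ≤ i.val and i.val ≠ m+2 : step down to i.val - 1
            obtain ⟨i', hi'⟩ : ∃ i' : Fin (2 * m + 3), (i' : ℕ) = (i : ℕ) - 1 :=
              ⟨⟨(i : ℕ) - 1, by omega⟩, rfl⟩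
            have hne : i ≠ i' := fun h => by have := congrArg Fin.val h; omega
            have hval : (i' : ℕ) + 1 = (i : ℕ) := by omega
            have hAii' : 0 < A i i' := by
              rw [hAoff i i' hne]
              by_cases hb : (i : ℕ) ≤ m + 1
              · exact hstepB i i' (by omega) hb hval
              · exact hstepL i i' (by omega) (by omega) hval
            obtain ⟨k, hk1, hkpos⟩ := ih i' (by omega)
            exact ⟨k + 1, by omega, pow_entry_pos_left hAnn hAii' hkpos⟩
  intro i j
  obtain ⟨k, hk1, hkpos⟩ := reach (i : ℕ) i (le_refl _)
  exact ⟨k + 1, by omega, pow_entry_pos_right hAnn hkpos (hA0j j)⟩
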